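/- For every integer n ≥ 2, the sequence 0 → S^{n−2} → S^n → S^{2n}(L(1)) → 0 is a short exact sequence of g-modules, where the first map is multiplication by c = h² + 4ef and the second map is the g-module homomorphism φ determined by φ(c·S^{n−2}) = 0, φ(e^i h^{n−i}) = (−2)^{−i} x^{n+i} y^{n−i}, φ(h^n) = x^n y^n, and φ(f^i h^{n−i}) = 2^{−i} x^{n−i} y^{n+i} for 1 ≤ i ≤ n. -/

import Mathlib

noncomputable section
open MvPolynomial

/-- `sl₂(k)`, realised as coordinate triples w.r.t. the standard basis `e, h, f`. -/
def sl2 (k : Type) [Field k] : Type := Fin 3 → k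

variable (k : Type) [Field k]

namespace sl2

instance : AddCommGroup (sl2 k) := Pi.addCommGroup
instance : Module k (sl2 k) := Pi.module _ _ _

/-- the standard basis vector `e` -/
def E : sl2 k := ![1, 0, 0]
/-- the standard basis vector `h` -/
def H : sl2 k := ![0, 1, 0]
/-- the standard basis vector `f` -/
def F : sl2 k := ![0, 0, 1]

/-- The identification of `sl₂` with coordinate triples. -/
def coordEquiv : sl2 k ≃ₗ[k] (Fin 3 → k) := LinearEquiv.refl k (sl2 k)

/-- The standard basis of `sl₂`. -/
def basis : Module.Basis (Fin 3) k (sl2 k) := Module.Basis.ofEquivFun (coordEquiv k)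

variable {k}

@[simp] lemma add_apply (u v : sl2 k) (i : Fin 3) : (u + v) i = u i + v i := rfl
@[simp] lemma smul_apply (t : k) (u : sl2 k) (i : Fin 3) : (t • u) i = t * u i := rfl
@[simp] lemma neg_apply (u : sl2 k) (i : Fin 3) : (-u) i = -(u i) := rfl
@[simp] lemma zero_apply (i : Fin 3) : (0 : sl2 k) i = 0 := rfl
@[simp] lemma E_apply₀ : E k 0 = 1 := rfl
@[simp] lemma E_apply₁ : E k 1 = 0 := rfl
@[simp] lemma E_apply₂ : E k 2 = 0 := rfl
@[simp] lemma H_apply₀ : H k 0 = 0 := rfl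
@[simp] lemma H_apply₁ : H k 1 = 1 := rfl
@[simp] lemma H_apply₂ : H k 2 = 0 := rfl
@[simp] lemma F_apply₀ : F k 0 = 0 := rfl
@[simp] lemma F_apply₁ : F k 1 = 0 := rfl
@[simp] lemma F_apply₂ : F k 2 = 1 := rfl

variable (k)

instance : LieRing (sl2 k) :=
  { (inferInstance : AddCommGroup (sl2 k)) with
    bracket := fun u v => ![2 * (u 1 * v 0 - u 0 * v 1),
                            u 0 * v 2 - u 2 * v 0,
                            2 * (u 2 * v 1 - u 1 * v 2)]
    add_lie := by
      intro u v w; funext i; fin_cases i <;>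
        · show (_ : k) = (_ : k) + _
          simp <;> ring
    lie_add := by
      intro u v w; funext i; fin_cases i <;>
        · show (_ : k) = (_ : k) + _
          simp <;> ring
    lie_self := by
      intro u; funext i; fin_cases i
      · show 2 * (u 1 * u 0 - u 0 * u 1) = (0 : sl2 k) 0; show _ = (0:k); ring
      · show u 0 * u 2 - u 2 * u 0 = (0 : sl2 k) 1; show _ = (0:k); ring
      · show 2 * (u 2 * u 1 - u 1 * u 2) = (0 : sl2 k) 2; show _ = (0:k); ring
    leibniz_lie := by
      intro u v w; funext i; fin_cases i <;>
        · show (_ : k) = (_ : k) + _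
          simp <;> ring }

variable {k}

@[simp] lemma lie_apply₀ (u v : sl2 k) : ⁅u, v⁆ 0 = 2 * (u 1 * v 0 - u 0 * v 1) := rfl
@[simp] lemma lie_apply₁ (u v : sl2 k) : ⁅u, v⁆ 1 = u 0 * v 2 - u 2 * v 0 := rfl
@[simp] lemma lie_apply₂ (u v : sl2 k) : ⁅u, v⁆ 2 = 2 * (u 2 * v 1 - u 1 * v 2) := rfl

variable (k)

instance : LieAlgebra k (sl2 k) where
  lie_smul t u v := by
    funext i; fin_cases i <;>
      · show _ = (_ : k) * _
        simp <;> ring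

lemma lie_H_E : ⁅H k, E k⁆ = (2 : k) • E k := by
  funext i; fin_cases i <;> simp
lemma lie_H_F : ⁅H k, F k⁆ = (-2 : k) • F k := by
  funext i; fin_cases i <;> simp
lemma lie_E_F : ⁅E k, F k⁆ = H k := by
  funext i; fin_cases i <;> simp

end sl2
/-- The symmetric algebra `S = k[e,h,f]` on the adjoint module, with
`X 0 = e`, `X 1 = h`, `X 2 = f`. -/
abbrev Sg (k : Type) [Field k] : Type := MvPolynomial (Fin 3) k

/-- The symmetric algebra `S(L(1)) = k[x,y]` on the natural module, with
`X 0 = x`, `X 1 = y`. -/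
abbrev Snat (k : Type) [Field k] : Type := MvPolynomial (Fin 2) k

namespace sl2

variable (k : Type) [Field k]

/-- The degree-one coordinate embedding `g → S`. -/
def toS : sl2 k →ₗ[k] Sg k where
  toFun u := u 0 • X 0 + u 1 • X 1 + u 2 • X 2
  map_add' u v := by simp only [add_apply, add_smul]; abel
  map_smul' t u := by simp only [smul_apply, RingHom.id_apply, smul_add, mul_smul]

variable {k}

lemma decomp (w : sl2 k) : w = w 0 • E k + w 1 • H k + w 2 • F k := by
  funext i; fin_cases i <;> simp

variable (k)

/-- The generators of `S` as images of the basis of `g`. -/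
def gens : Fin 3 → sl2 k := ![E k, H k, F k]

@[simp] lemma gens₀ : gens k 0 = E k := rfl
@[simp] lemma gens₁ : gens k 1 = H k := rfl
@[simp] lemma gens₂ : gens k 2 = F k := rfl

/-- The rows of the adjoint action. -/
def adjRow : sl2 k →ₗ[k] (Fin 3 → Sg k) where
  toFun u := fun j => toS k ⁅u, gens k j⁆
  map_add' u v := by funext j; simp only [add_lie, map_add]; rfl
  map_smul' t u := by funext j; simp only [smul_lie, map_smul]; rfl

/-- The action of `g` on its symmetric algebra `S`, by the derivations extending
the adjoint action. -/
def actS : sl2 k →ₗ[k] Derivation k (Sg k) (Sg k) :=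
  (MvPolynomial.mkDerivationEquiv k).toLinearMap.comp (adjRow k)

variable {k}

@[simp] lemma actS_X (u : sl2 k) (j : Fin 3) :
    actS k u (X j) = toS k ⁅u, gens k j⁆ :=
  MvPolynomial.mkDerivation_X _ _ _

lemma actS_toS (u w : sl2 k) : actS k u (toS k w) = toS k ⁅u, w⁆ := by
  have hw := decomp w
  have : toS k w = w 0 • (X 0 : Sg k) + w 1 • X 1 + w 2 • X 2 := rfl
  rw [this]
  simp only [map_add, Derivation.map_smul, actS_X, gens₀, gens₁, gens₂]
  conv_rhs => rw [hw]
  simp only [lie_add, lie_smul, map_add, map_smul]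

lemma actS_comm (u v : sl2 k) : actS k ⁅u, v⁆ = ⁅actS k u, actS k v⁆ := by
  apply MvPolynomial.derivation_ext
  intro j
  rw [Derivation.commutator_apply]
  simp only [actS_X, actS_toS]
  rw [← map_sub]
  congr 1
  rw [leibniz_lie]
  abel

instance : LieRingModule (sl2 k) (Sg k) where
  bracket u s := actS k u s
  add_lie u v s := by
    show actS k (u + v) s = actS k u s + actS k v s
    rw [map_add]; rfl
  lie_add u s t := by
    show actS k u (s + t) = actS k u s + actS k u t
    exact map_add _ _ _
  leibniz_lie u v s := by
    show actS k u (actS k v s) = actS k ⁅u, v⁆ s + actS k v (actS k u s)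
    rw [actS_comm]
    rw [Derivation.commutator_apply]
    abel

@[simp] lemma lie_Sg_def (u : sl2 k) (s : Sg k) : ⁅u, s⁆ = actS k u s := rfl

instance : LieModule k (sl2 k) (Sg k) where
  smul_lie t u s := by
    show actS k (t • u) s = t • actS k u s
    rw [map_smul]; rfl
  lie_smul t u s := by
    show actS k u (t • s) = t • actS k u s
    exact Derivation.map_smul _ _ _

lemma lie_mul_Sg (u : sl2 k) (s t : Sg k) :
    ⁅u, s * t⁆ = ⁅u, s⁆ * t + s * ⁅u, t⁆ := by
  show actS k u (s * t) = _
  rw [Derivation.leibniz]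
  simp only [smul_eq_mul, lie_Sg_def]
  ring

end sl2
namespace MvPolynomial

variable {k : Type} [Field k] {σ : Type*}

lemma Finsupp.degree_add' (a b : σ →₀ ℕ) :
    Finsupp.degree (a + b) = Finsupp.degree a + Finsupp.degree b := by
  simp only [Finsupp.degree_eq_weight_one, map_add]

/-- A derivation whose values on the variables are homogeneous of degree one
preserves homogeneity. -/
lemma isHomogeneous_mkDerivation (f : σ → MvPolynomial σ k)
    (hf : ∀ i, (f i).IsHomogeneous 1) {p : MvPolynomial σ k} {n : ℕ}
    (hp : p.IsHomogeneous n) :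
    ((MvPolynomial.mkDerivation k f) p).IsHomogeneous n := by
  rw [← p.support_sum_monomial_coeff, map_sum]
  apply IsHomogeneous.sum
  intro d hd
  rw [MvPolynomial.mkDerivation_monomial, smul_eq_C_mul]
  have h0 : (0 : ℕ) + n = n := by omega
  rw [← h0]
  apply (isHomogeneous_C _ _).mul
  rw [Finsupp.sum]
  apply IsHomogeneous.sum
  intro i hi
  have hdi : d i ≠ 0 := Finsupp.mem_support_iff.mp hi
  have hdeg : Finsupp.degree d = n := by
    rw [Finsupp.degree_eq_weight_one]
    exact hp (mem_support_iff.mp hd)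
  have hn : 1 ≤ n := by
    have := Finsupp.le_degree i d
    omega
  obtain ⟨m, rfl⟩ : ∃ m, n = m + 1 := ⟨n - 1, by omega⟩
  have h1 : (d - Finsupp.single i 1) + Finsupp.single i 1 = d :=
    tsub_add_cancel_of_le (by
      rw [Finsupp.single_le_iff]; omega)
  have h2 : Finsupp.degree (d - Finsupp.single i 1) = m := by
    have := congrArg Finsupp.degree h1
    rw [Finsupp.degree_add'] at this
    have hs : Finsupp.degree (Finsupp.single i 1) = 1 := by
      exact Finsupp.degree_single _ _
    omega
  have h3 : ((monomial (d - Finsupp.single i 1)) ((d i : k))).IsHomogeneous m :=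
    isHomogeneous_monomial _ h2
  rw [smul_eq_mul]
  exact h3.mul (hf i)

end MvPolynomial
namespace sl2

variable (k : Type) [Field k]

/-- The rows of the natural action of `sl₂` on linear forms in `x, y`:
`u · x = u₁ x + u₂ y` and `u · y = u₀ x - u₁ y`. -/
def natRow : sl2 k →ₗ[k] (Fin 2 → Snat k) where
  toFun u := ![u 1 • X 0 + u 2 • X 1, u 0 • X 0 - u 1 • X 1]
  map_add' u v := by
    funext j; fin_cases j
    · show (u + v) 1 • (X 0 : Snat k) + (u + v) 2 • X 1 =
        (u 1 • X 0 + u 2 • X 1) + (v 1 • X 0 + v 2 • X 1)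
      simp only [add_apply, add_smul]; abel
    · show (u + v) 0 • (X 0 : Snat k) - (u + v) 1 • X 1 =
        (u 0 • X 0 - u 1 • X 1) + (v 0 • X 0 - v 1 • X 1)
      simp only [add_apply, add_smul]; abel
  map_smul' t u := by
    funext j; fin_cases j
    · show (t • u) 1 • (X 0 : Snat k) + (t • u) 2 • X 1 =
        t • (u 1 • X 0 + u 2 • X 1)
      simp only [smul_apply, smul_add, mul_smul]
    · show (t • u) 0 • (X 0 : Snat k) - (t • u) 1 • X 1 =
        t • (u 0 • X 0 - u 1 • X 1)
      simp only [smul_apply, smul_sub, mul_smul]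

/-- The action of `sl₂` on the symmetric algebra of the natural module, by the
derivations extending the natural action. -/
def actP : sl2 k →ₗ[k] Derivation k (Snat k) (Snat k) :=
  (MvPolynomial.mkDerivationEquiv k).toLinearMap.comp (natRow k)

variable {k}

@[simp] lemma actP_X0 (u : sl2 k) :
    actP k u (X 0) = u 1 • (X 0 : Snat k) + u 2 • X 1 :=
  MvPolynomial.mkDerivation_X _ _ _

@[simp] lemma actP_X1 (u : sl2 k) :
    actP k u (X 1) = u 0 • (X 0 : Snat k) - u 1 • X 1 :=
  MvPolynomial.mkDerivation_X _ _ _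

lemma actP_comm (u v : sl2 k) : actP k ⁅u, v⁆ = ⁅actP k u, actP k v⁆ := by
  apply MvPolynomial.derivation_ext
  intro j
  rw [Derivation.commutator_apply]
  fin_cases j
  · show actP k ⁅u, v⁆ (X 0) = actP k u (actP k v (X 0)) - actP k v (actP k u (X 0))
    simp only [actP_X0, actP_X1, map_add, map_sub, Derivation.map_smul]
    simp only [lie_apply₀, lie_apply₁, lie_apply₂, MvPolynomial.smul_eq_C_mul,
      map_mul, map_sub, map_add, map_ofNat]
    ring
  · show actP k ⁅u, v⁆ (X 1) = actP k u (actP k v (X 1)) - actP k v (actP k u (X 1))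
    simp only [actP_X0, actP_X1, map_add, map_sub, Derivation.map_smul]
    simp only [lie_apply₀, lie_apply₁, lie_apply₂, MvPolynomial.smul_eq_C_mul,
      map_mul, map_sub, map_add, map_ofNat]
    ring

instance : LieRingModule (sl2 k) (Snat k) where
  bracket u s := actP k u s
  add_lie u v s := by
    show actP k (u + v) s = actP k u s + actP k v s
    rw [map_add]; rfl
  lie_add u s t := by
    show actP k u (s + t) = actP k u s + actP k u t
    exact map_add _ _ _
  leibniz_lie u v s := by
    show actP k u (actP k v s) = actP k ⁅u, v⁆ s + actP k v (actP k u s)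
    rw [actP_comm, Derivation.commutator_apply]
    abel

@[simp] lemma lie_Snat_def (u : sl2 k) (s : Snat k) : ⁅u, s⁆ = actP k u s := rfl

instance : LieModule k (sl2 k) (Snat k) where
  smul_lie t u s := by
    show actP k (t • u) s = t • actP k u s
    rw [map_smul]; rfl
  lie_smul t u s := by
    show actP k u (t • s) = t • actP k u s
    exact Derivation.map_smul _ _ _

lemma lie_mul_Snat (u : sl2 k) (s t : Snat k) :
    ⁅u, s * t⁆ = ⁅u, s⁆ * t + s * ⁅u, t⁆ := by
  show actP k u (s * t) = _
  rw [Derivation.leibniz]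
  simp only [smul_eq_mul, lie_Snat_def]
  ring

variable (k)

/-- The `n`-th symmetric power of the adjoint module, as a Lie submodule of `S`. -/
def SD (n : ℕ) : LieSubmodule k (sl2 k) (Sg k) :=
  { MvPolynomial.homogeneousSubmodule (Fin 3) k n with
    lie_mem := by
      intro u p hp
      have hp' : p.IsHomogeneous n := hp
      show ((MvPolynomial.mkDerivation k fun j => toS k ⁅u, gens k j⁆) p).IsHomogeneous n
      apply MvPolynomial.isHomogeneous_mkDerivation
      · intro i
        show ((toS k) ⁅u, gens k i⁆).IsHomogeneous 1
        set w := ⁅u, gens k i⁆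
        have : toS k w = w 0 • X 0 + w 1 • X 1 + w 2 • X 2 := rfl
        rw [this]
        simp only [MvPolynomial.smul_eq_C_mul]
        apply MvPolynomial.IsHomogeneous.add
        apply MvPolynomial.IsHomogeneous.add
        all_goals
          exact (MvPolynomial.isHomogeneous_X _ _).C_mul _
      · exact hp' }

/-- The `m`-th symmetric power of the natural module, as a Lie submodule of
`S(L(1))`. -/
def PD (m : ℕ) : LieSubmodule k (sl2 k) (Snat k) :=
  { MvPolynomial.homogeneousSubmodule (Fin 2) k m with
    lie_mem := by
      intro u p hp
      have hp' : p.IsHomogeneous m := hp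
      show ((MvPolynomial.mkDerivation k (natRow k u)) p).IsHomogeneous m
      apply MvPolynomial.isHomogeneous_mkDerivation
      · intro i
        fin_cases i
        · show ((u 1 • (X 0 : Snat k) + u 2 • X 1)).IsHomogeneous 1
          simp only [MvPolynomial.smul_eq_C_mul]
          exact ((MvPolynomial.isHomogeneous_X _ _).C_mul _).add
            ((MvPolynomial.isHomogeneous_X _ _).C_mul _)
        · show ((u 0 • (X 0 : Snat k) - u 1 • X 1)).IsHomogeneous 1
          rw [sub_eq_add_neg, ← neg_smul]
          simp only [MvPolynomial.smul_eq_C_mul]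
          exact ((MvPolynomial.isHomogeneous_X _ _).C_mul _).add
            ((MvPolynomial.isHomogeneous_X _ _).C_mul _)
      · exact hp' }

variable {k}

lemma mem_SD_iff {n : ℕ} {p : Sg k} : p ∈ SD k n ↔ p.IsHomogeneous n := Iff.rfl

lemma mem_PD_iff {m : ℕ} {p : Snat k} : p ∈ PD k m ↔ p.IsHomogeneous m := Iff.rfl

end sl2
namespace sl2

variable (k : Type) [Field k]

/-- The trivial Lie module structure on `k`. -/
instance : LieRingModule (sl2 k) k where
  bracket _ _ := 0
  add_lie _ _ _ := by simp
  lie_add _ _ _ := by simp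
  leibniz_lie _ _ _ := by simp

@[simp] lemma lie_triv (u : sl2 k) (a : k) : ⁅u, a⁆ = 0 := rfl

instance : LieModule k (sl2 k) k where
  smul_lie _ _ _ := by simp
  lie_smul _ _ _ := by simp

end sl2

/-- `U = U(sl₂(k))`, the universal enveloping algebra. -/
abbrev UEnv (k : Type) [Field k] : Type := UniversalEnvelopingAlgebra k (sl2 k)

section UModules

variable (k : Type) [Field k]
variable (M : Type) [AddCommGroup M] [Module k M]
  [LieRingModule (sl2 k) M] [LieModule k (sl2 k) M]

/-- The `U`-module structure on a Lie module for `sl₂(k)`. -/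
def uModule : Module (UEnv k) M :=
  Module.compHom M
    (UniversalEnvelopingAlgebra.lift k (LieModule.toEnd k (sl2 k) M)).toRingHom

/-- A Lie module for `sl₂(k)`, regarded as an object in the category of modules
over the universal enveloping algebra. -/
def uMod : ModuleCat (UEnv k) :=
  letI := uModule k M
  ModuleCat.of (UEnv k) M

variable {k M}

lemma uSmul_def (a : UEnv k) (m : M) :
    letI := uModule k M
    a • m = UniversalEnvelopingAlgebra.lift k (LieModule.toEnd k (sl2 k) M) a m := rfl

lemma uSmul_iota (x : sl2 k) (m : M) :
    letI := uModule k M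
    (UniversalEnvelopingAlgebra.ι k x : UEnv k) • m = ⁅x, m⁆ := by
  letI := uModule k M
  rw [uSmul_def, UniversalEnvelopingAlgebra.lift_ι_apply]
  rfl

variable {N : Type} [AddCommGroup N] [Module k N]
  [LieRingModule (sl2 k) N] [LieModule k (sl2 k) N]

lemma uSmul_map (f : M →ₗ[k] N) (hf : ∀ (u : sl2 k) (m : M), f ⁅u, m⁆ = ⁅u, f m⁆)
    (a : UEnv k) (m : M) :
    letI := uModule k M
    letI := uModule k N
    f (a • m) = a • f m := by
  letI := uModule k M
  letI := uModule k N
  have hsurj : Function.Surjective (UniversalEnvelopingAlgebra.mkAlgHom k (sl2 k)) := by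
    first
    | exact RingCon.mkₐ_surjective _
    | exact RingCon.mkₐ_surjective k _
  obtain ⟨b, rfl⟩ := hsurj a
  induction b using TensorAlgebra.induction generalizing m with
  | algebraMap r =>
      rw [AlgHom.commutes, uSmul_def, uSmul_def, AlgHom.commutes,
        Module.algebraMap_end_apply, AlgHom.commutes, Module.algebraMap_end_apply,
        map_smul]
  | ι x =>
      have hx : UniversalEnvelopingAlgebra.mkAlgHom k (sl2 k)
          (TensorAlgebra.ι k x) = UniversalEnvelopingAlgebra.ι k x := rfl
      rw [hx, uSmul_iota, uSmul_iota, hf]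
  | mul x y hx hy =>
      rw [map_mul, mul_smul, mul_smul, hx, hy]
  | add x y hx hy =>
      rw [map_add, add_smul, add_smul, map_add, hx, hy]

variable (k)

/-- A morphism of Lie modules induces a morphism of the corresponding
`U`-modules. -/
def uHom (f : M →ₗ[k] N) (hf : ∀ (u : sl2 k) (m : M), f ⁅u, m⁆ = ⁅u, f m⁆) :
    uMod k M ⟶ uMod k N :=
  letI := uModule k M
  letI := uModule k N
  ModuleCat.ofHom
    { toFun := f
      map_add' := f.map_add
      map_smul' := fun a m => uSmul_map f hf a m }

end UModules

section ExtU

variable (k : Type) [Field k]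

/-- `Ext^n_U(k, M)` where `k` is the trivial `U`-module. -/
def extU (n : ℕ) (M : ModuleCat (UEnv k)) : ModuleCat k :=
  ((Ext k (ModuleCat (UEnv k)) n).obj (Opposite.op (uMod k k))).obj M

/-- Functoriality of `Ext^n_U(k, -)`. -/
def extUMap (n : ℕ) {M N : ModuleCat (UEnv k)} (f : M ⟶ N) :
    extU k n M ⟶ extU k n N :=
  ((Ext k (ModuleCat (UEnv k)) n).obj (Opposite.op (uMod k k))).map f

end ExtU
namespace sl2

variable (k : Type) [Field k]

/-- The Casimir-type invariant `c = h² + 4ef ∈ S`. -/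
def cElt : Sg k := X 1 ^ 2 + 4 * (X 0 * X 2)

variable {k}

lemma toS_apply (w : sl2 k) :
    toS k w = w 0 • (X 0 : Sg k) + w 1 • X 1 + w 2 • X 2 := rfl

lemma lie_X0 (u : sl2 k) :
    ⁅u, (X 0 : Sg k)⁆ = C (2 * u 1) * X 0 - C (u 2) * X 1 := by
  show actS k u (X 0) = _
  rw [actS_X, gens₀, toS_apply]
  simp only [lie_apply₀, lie_apply₁, lie_apply₂, E_apply₀, E_apply₁, E_apply₂,
    MvPolynomial.smul_eq_C_mul, map_mul, map_sub, map_add, map_neg, map_ofNat,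
    map_zero, map_one]
  ring

lemma lie_X1 (u : sl2 k) :
    ⁅u, (X 1 : Sg k)⁆ = C (2 * u 2) * X 2 - C (2 * u 0) * X 0 := by
  show actS k u (X 1) = _
  rw [actS_X, gens₁, toS_apply]
  simp only [lie_apply₀, lie_apply₁, lie_apply₂, H_apply₀, H_apply₁, H_apply₂,
    MvPolynomial.smul_eq_C_mul, map_mul, map_sub, map_add, map_neg, map_ofNat,
    map_zero, map_one]
  ring

lemma lie_X2 (u : sl2 k) :
    ⁅u, (X 2 : Sg k)⁆ = C (u 0) * X 1 - C (2 * u 1) * X 2 := by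
  show actS k u (X 2) = _
  rw [actS_X, gens₂, toS_apply]
  simp only [lie_apply₀, lie_apply₁, lie_apply₂, F_apply₀, F_apply₁, F_apply₂,
    MvPolynomial.smul_eq_C_mul, map_mul, map_sub, map_add, map_neg, map_ofNat,
    map_zero, map_one]
  ring

lemma lie_C (u : sl2 k) (r : k) : ⁅u, (C r : Sg k)⁆ = 0 := by
  show actS k u (C r) = 0
  rw [show (C r : Sg k) = algebraMap k (Sg k) r from rfl]
  exact Derivation.map_algebraMap _ _

/-- `c` is an invariant of the adjoint action. -/
lemma lie_cElt (u : sl2 k) : ⁅u, cElt k⁆ = 0 := by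
  rw [cElt, sq, lie_add, lie_mul_Sg,
    show (4 : Sg k) = C (4 : k) from by rw [map_ofNat],
    lie_mul_Sg, lie_C, lie_mul_Sg, lie_X0, lie_X1, lie_X2]
  simp only [map_mul, map_ofNat]
  ring

/-- In characteristic `p`, the `p`-th powers `e^p, h^p, f^p` are invariants. -/
lemma lie_X_pow_p (p : ℕ) [CharP k p] (u : sl2 k) (i : Fin 3) :
    ⁅u, (X i ^ p : Sg k)⁆ = 0 := by
  show actS k u (X i ^ p) = 0
  rw [Derivation.leibniz_pow, nsmul_eq_mul,
    show ((p : ℕ) : Sg k) = C ((p : ℕ) : k) from (MvPolynomial.C_eq_coe_nat p).symm,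
    CharP.cast_eq_zero, map_zero, zero_mul]

end sl2
namespace sl2

variable (k : Type) [Field k]

/-- The linear map `g → S` taking prescribed values `a, b, c` on the standard
basis `e, h, f`. -/
def lmap (a b c : Sg k) : sl2 k →ₗ[k] Sg k where
  toFun u := u 0 • a + u 1 • b + u 2 • c
  map_add' u v := by simp only [add_apply, add_smul]; abel
  map_smul' t u := by
    simp only [smul_apply, RingHom.id_apply, smul_add, mul_smul]

variable {k}

@[simp] lemma lmap_E (a b c : Sg k) : lmap k a b c (E k) = a := by
  show E k 0 • a + E k 1 • b + E k 2 • c = a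
  simp

@[simp] lemma lmap_H (a b c : Sg k) : lmap k a b c (H k) = b := by
  show H k 0 • a + H k 1 • b + H k 2 • c = b
  simp

@[simp] lemma lmap_F (a b c : Sg k) : lmap k a b c (F k) = c := by
  show F k 0 • a + F k 1 • b + F k 2 • c = c
  simp

/-- The 1-cocycle condition for a linear map `g → S`
(Chevalley–Eilenberg complex for the standard resolution of `k` over `U`). -/
def IsCocycle1 (α : sl2 k →ₗ[k] Sg k) : Prop :=
  ∀ u v : sl2 k, α ⁅u, v⁆ = ⁅u, α v⁆ - ⁅v, α u⁆

/-- The 1-coboundary condition: `α` is the differential of some `z ∈ S`. -/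
def IsCoboundary1 (α : sl2 k →ₗ[k] Sg k) : Prop :=
  ∃ z : Sg k, ∀ u : sl2 k, α u = ⁅u, z⁆

/-- The 2-cocycle condition, for a `2`-cochain recorded as the triple of its
values on `h∧f`, `e∧f`, `e∧h`. -/
def IsCocycle2 (γ : Fin 3 → Sg k) : Prop :=
  ⁅E k, γ 0⁆ + ⁅F k, γ 2⁆ = ⁅H k, γ 1⁆

/-- The 2-coboundary condition: the differential of a linear map `β : g → S` is
the `2`-cochain `u∧v ↦ u·β(v) - v·β(u) - β([u,v])`, recorded as the triple of
its values on `h∧f`, `e∧f`, `e∧h`. -/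
def IsCoboundary2 (γ : Fin 3 → Sg k) : Prop :=
  ∃ β : sl2 k →ₗ[k] Sg k,
    γ 0 = ⁅H k, β (F k)⁆ - ⁅F k, β (H k)⁆ - β ⁅H k, F k⁆ ∧
    γ 1 = ⁅E k, β (F k)⁆ - ⁅F k, β (E k)⁆ - β ⁅E k, F k⁆ ∧
    γ 2 = ⁅E k, β (H k)⁆ - ⁅H k, β (E k)⁆ - β ⁅E k, H k⁆

lemma cElt_isHomogeneous : (cElt k).IsHomogeneous 2 := by
  rw [cElt]
  apply MvPolynomial.IsHomogeneous.add
  · exact MvPolynomial.isHomogeneous_X_pow _ _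
  · rw [show (4 : Sg k) = C (4 : k) from by rw [map_ofNat]]
    have h := (MvPolynomial.isHomogeneous_C (Fin 3) (4 : k)).mul
      ((MvPolynomial.isHomogeneous_X k 0).mul (MvPolynomial.isHomogeneous_X k 2))
    simpa using h

variable (k)

/-- Multiplication by `c` as a linear map `S^{n-2} → S^n`  (`2 ≤ n`). -/
def mulC (n : ℕ) (hn : 2 ≤ n) : ↥(SD k (n - 2)) →ₗ[k] ↥(SD k n) where
  toFun s := ⟨cElt k * (s : Sg k), by
    have := (cElt_isHomogeneous (k := k)).mul (mem_SD_iff.mp s.2)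
    rw [Nat.add_sub_cancel' hn] at this
    exact mem_SD_iff.mpr this⟩
  map_add' s t := by
    apply Subtype.ext
    show cElt k * ((s : Sg k) + (t : Sg k)) = cElt k * (s : Sg k) + cElt k * (t : Sg k)
    ring
  map_smul' a s := by
    apply Subtype.ext
    show cElt k * (a • (s : Sg k)) = a • (cElt k * (s : Sg k))
    rw [mul_smul_comm]

lemma mulC_equivariant (n : ℕ) (hn : 2 ≤ n) (u : sl2 k) (s : ↥(SD k (n - 2))) :
    mulC k n hn ⁅u, s⁆ = ⁅u, mulC k n hn s⁆ := by
  apply Subtype.ext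
  show cElt k * (⁅u, (s : Sg k)⁆) = ⁅u, cElt k * (s : Sg k)⁆
  rw [lie_mul_Sg, lie_cElt, zero_mul, zero_add]

/-- The defining properties of the `g`-module map `φ : S^n → S^{2n}(L(1))`:
it kills `c·S^{n-2}` and sends `e^i h^{n-i} ↦ (-2)^{-i} x^{n+i} y^{n-i}`,
`h^n ↦ x^n y^n`, `f^i h^{n-i} ↦ 2^{-i} x^{n-i} y^{n+i}`. -/
def IsPhi (n : ℕ) (φ : ↥(SD k n) →ₗ[k] ↥(PD k (2 * n))) : Prop :=
  (∀ (u : sl2 k) (s : ↥(SD k n)), φ ⁅u, s⁆ = ⁅u, φ s⁆) ∧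
  (∀ (s : ↥(SD k n)) (t : Sg k), t.IsHomogeneous (n - 2) →
      (s : Sg k) = cElt k * t → φ s = 0) ∧
  (∀ (s : ↥(SD k n)) (i : ℕ), i ≤ n →
      (s : Sg k) = X 0 ^ i * X 1 ^ (n - i) →
      ((φ s : Snat k)) = (((-2 : k) ^ i)⁻¹) • (X 0 ^ (n + i) * X 1 ^ (n - i))) ∧
  (∀ (s : ↥(SD k n)) (i : ℕ), i ≤ n →
      (s : Sg k) = X 2 ^ i * X 1 ^ (n - i) →
      ((φ s : Snat k)) = (((2 : k) ^ i)⁻¹) • (X 0 ^ (n - i) * X 1 ^ (n + i)))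
end sl2

namespace sl2

variable {k}

lemma expand_two_monomial (d : Fin 2 →₀ ℕ) (r : k) :
    expand 2 (monomial d r) = monomial (2 • d) r := by
  rw [expand_monomial, monomial_eq]

lemma two_smul_inj {d d' : Fin 2 →₀ ℕ} (h : 2 • d = 2 • d') : d = d' := by
  ext i
  have := congrArg (fun f => f i) h
  simp only [Finsupp.smul_apply, smul_eq_mul] at this
  omega

lemma coeff_expand_two (z : MvPolynomial (Fin 2) k) (d : Fin 2 →₀ ℕ) :
    coeff (2 • d) (expand 2 z) = coeff d z := by
  conv_lhs => rw [← z.support_sum_monomial_coeff]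
  rw [map_sum, coeff_sum]
  have : ∀ d' ∈ z.support,
      coeff (2 • d) (expand 2 (monomial d' (coeff d' z)))
        = if d' = d then coeff d' z else 0 := by
    intro d' _
    rw [expand_two_monomial, coeff_monomial]
    congr 1
    simp only [eq_iff_iff]
    constructor
    · exact fun h => two_smul_inj h
    · rintro rfl; rfl
  rw [Finset.sum_congr rfl this, Finset.sum_ite_eq' z.support d (fun d' => coeff d' z)]
  split
  · rfl
  · next h => exact (notMem_support_iff.mp h).symm

lemma expand_two_injective :
    Function.Injective (expand 2 : MvPolynomial (Fin 2) k →ₐ[k] MvPolynomial (Fin 2) k) := by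
  intro a b h
  ext d
  rw [← coeff_expand_two a d, ← coeff_expand_two b d, h]

variable (k)

/-- `ψ : e ↦ -x²/2, h ↦ xy, f ↦ y²/2`. -/
def psi : Sg k →ₐ[k] Snat k :=
  aeval ![-(C (2:k)⁻¹) * X 0 ^ 2, X 0 * X 1, C (2:k)⁻¹ * X 1 ^ 2]

def gmap : MvPolynomial (Fin 2) k →ₐ[k] Snat k :=
  aeval ![-(C (2:k)⁻¹) * X 0 ^ 2, C (2:k)⁻¹ * X 1 ^ 2]

def rho : MvPolynomial (Fin 2) k →ₐ[k] MvPolynomial (Fin 2) k :=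
  aeval ![-(C (2:k)⁻¹) * X 0, C (2:k)⁻¹ * X 1]

def rho' : MvPolynomial (Fin 2) k →ₐ[k] MvPolynomial (Fin 2) k :=
  aeval ![-(C (2:k)) * X 0, C (2:k) * X 1]

def sigmaMap : Snat k →ₐ[k] Snat k := aeval ![-X 0, X 1]

def tauE : Sg k ≃ₐ[k] Sg k := renameEquiv k (Equiv.swap (0 : Fin 3) 1)

def fse : Sg k ≃ₐ[k] Polynomial (MvPolynomial (Fin 2) k) := finSuccEquiv k 2

def PsiA : Polynomial (MvPolynomial (Fin 2) k) →ₐ[k] Snat k :=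
  Polynomial.aevalTower (gmap k) (X 0 * X 1)

def Cp : Polynomial (MvPolynomial (Fin 2) k) :=
  Polynomial.X ^ 2 + Polynomial.C (4 * (X 0 * X 1))

variable {k}

@[simp] lemma psi_X0 : psi k (X 0) = -(C (2:k)⁻¹) * X 0 ^ 2 := by simp [psi]
@[simp] lemma psi_X1 : psi k (X 1) = X 0 * X 1 := by simp [psi]
@[simp] lemma psi_X2 : psi k (X 2) = C (2:k)⁻¹ * X 1 ^ 2 := by simp [psi]
@[simp] lemma psi_C (r : k) : psi k (C r) = C r := by simp [psi]
@[simp] lemma gmap_X0 : gmap k (X 0) = -(C (2:k)⁻¹) * X 0 ^ 2 := by simp [gmap]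
@[simp] lemma gmap_X1 : gmap k (X 1) = C (2:k)⁻¹ * X 1 ^ 2 := by simp [gmap]

lemma hCmul (h2 : (2:k) ≠ 0) : (C ((2:k)⁻¹) * 2 : Snat k) = 1 := by
  rw [show (2 : Snat k) = C (2:k) from (map_ofNat C 2).symm, ← map_mul,
    inv_mul_cancel₀ h2, map_one]

lemma expand_two_comp_rho : (expand 2).comp (rho k) = gmap k := by
  apply MvPolynomial.algHom_ext
  intro i
  fin_cases i <;> simp [rho, gmap, mul_pow]

lemma rho'_comp_rho (h2 : (2:k) ≠ 0) :
    (rho' k).comp (rho k) = AlgHom.id k (MvPolynomial (Fin 2) k) := by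
  apply MvPolynomial.algHom_ext
  intro i
  fin_cases i <;>
    · simp [rho, rho', ← C_mul]
      rw [← mul_assoc, ← C_mul, inv_mul_cancel₀ h2, C_1, one_mul]

lemma rho_injective (h2 : (2:k) ≠ 0) : Function.Injective (rho k) := by
  intro a b h
  have := congrArg (rho' k) h
  have ha := congrArg (fun F : MvPolynomial (Fin 2) k →ₐ[k] MvPolynomial (Fin 2) k => F a)
    (rho'_comp_rho h2)
  have hb := congrArg (fun F : MvPolynomial (Fin 2) k →ₐ[k] MvPolynomial (Fin 2) k => F b)
    (rho'_comp_rho h2)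
  simp only [AlgHom.comp_apply, AlgHom.id_apply] at ha hb
  rw [← ha, ← hb, this]

lemma gmap_injective (h2 : (2:k) ≠ 0) : Function.Injective (gmap k) := by
  intro a b h
  apply rho_injective h2
  apply expand_two_injective
  have ha := congrArg (fun F : MvPolynomial (Fin 2) k →ₐ[k] MvPolynomial (Fin 2) k => F a)
    expand_two_comp_rho
  have hb := congrArg (fun F : MvPolynomial (Fin 2) k →ₐ[k] MvPolynomial (Fin 2) k => F b)
    expand_two_comp_rho
  simp only [AlgHom.comp_apply] at ha hb
  show (expand 2 : MvPolynomial (Fin 2) k →ₐ[k] _) _ = (expand 2 : MvPolynomial (Fin 2) k →ₐ[k] _) _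
  rw [ha, hb] at *
  exact h

lemma sigma_comp_gmap : (sigmaMap k).comp (gmap k) = gmap k := by
  apply MvPolynomial.algHom_ext
  intro i
  fin_cases i <;> simp [sigmaMap, gmap, neg_pow]

/-- key parity lemma -/
lemma parity (h2 : (2:k) ≠ 0) (a b : MvPolynomial (Fin 2) k)
    (h : gmap k a + gmap k b * (X 0 * X 1) = 0) : a = 0 ∧ b = 0 := by
  have hs := congrArg (sigmaMap k) h
  have hga : sigmaMap k (gmap k a) = gmap k a :=
    congrArg (fun F : MvPolynomial (Fin 2) k →ₐ[k] Snat k => F a) sigma_comp_gmap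
  have hgb : sigmaMap k (gmap k b) = gmap k b :=
    congrArg (fun F : MvPolynomial (Fin 2) k →ₐ[k] Snat k => F b) sigma_comp_gmap
  have hX0 : sigmaMap k (X 0) = -X 0 := by simp [sigmaMap]
  have hX1 : sigmaMap k (X 1) = X 1 := by simp [sigmaMap]
  rw [map_add, map_mul, map_mul, hga, hgb, hX0, hX1, map_zero] at hs
  have h2' : (2 : Snat k) ≠ 0 := by
    rw [show (2 : Snat k) = C (2:k) from (map_ofNat C 2).symm]
    simpa using h2
  have hb0 : gmap k b = 0 := by
    have hmul : (2 : Snat k) * (gmap k b * (X 0 * X 1)) = 0 := by linear_combination h - hs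
    have := mul_eq_zero.mp hmul
    rcases this with h' | h'
    · exact absurd h' h2'
    · rcases mul_eq_zero.mp h' with h'' | h''
      · exact h''
      · exact absurd h'' (by
          exact mul_ne_zero (X_ne_zero 0) (X_ne_zero 1))
  have ha0 : gmap k a = 0 := by
    rw [hb0, zero_mul, add_zero] at h; exact h
  constructor
  · exact gmap_injective h2 (by rw [ha0, map_zero])
  · exact gmap_injective h2 (by rw [hb0, map_zero])

lemma monic_Cp : (Cp k).Monic := by
  apply Polynomial.monic_X_pow_add
  exact lt_of_le_of_lt Polynomial.degree_C_le (by norm_num)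

lemma degree_Cp : (Cp k).degree = 2 := by
  rw [Cp, Polynomial.degree_X_pow_add_C (by norm_num)]
  norm_num

@[simp] lemma PsiA_C (z : MvPolynomial (Fin 2) k) : PsiA k (Polynomial.C z) = gmap k z := by
  simp [PsiA]

@[simp] lemma PsiA_X : PsiA k Polynomial.X = X 0 * X 1 := by
  simp [PsiA]

@[simp] lemma tau_X0 : tauE k (X 0) = X 1 := by simp [tauE]
@[simp] lemma tau_X1 : tauE k (X 1) = X 0 := by simp [tauE]
@[simp] lemma tau_X2 : tauE k (X 2) = X 2 := by
  simp [tauE, Equiv.swap_apply_of_ne_of_ne (by decide : (2:Fin 3) ≠ 0)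
    (by decide : (2:Fin 3) ≠ 1)]
@[simp] lemma fse_X0 : fse k (X 0) = Polynomial.X := finSuccEquiv_X_zero
@[simp] lemma fse_X1 : fse k (X 1) = Polynomial.C (X 0) := by
  rw [show ((1 : Fin 3)) = Fin.succ 0 from rfl]; exact finSuccEquiv_X_succ
@[simp] lemma fse_X2 : fse k (X 2) = Polynomial.C (X 1) := by
  rw [show ((2 : Fin 3)) = Fin.succ 1 from rfl]; exact finSuccEquiv_X_succ

lemma compat (s : Sg k) : PsiA k (fse k (tauE k s)) = psi k s := by
  have : (PsiA k).comp (((fse k) : Sg k →ₐ[k] Polynomial (MvPolynomial (Fin 2) k)).comp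
      ((tauE k) : Sg k →ₐ[k] Sg k)) = psi k := by
    apply MvPolynomial.algHom_ext
    intro i
    fin_cases i <;> simp
  exact congrArg (fun F : Sg k →ₐ[k] Snat k => F s) this

lemma fse_tau_cElt : fse k (tauE k (cElt k)) = Cp k := by
  rw [cElt]
  rw [map_add, map_add, map_pow, map_pow, map_mul, map_mul, map_mul, map_mul,
    tau_X0, tau_X1, tau_X2,
    show (tauE k) (4 : Sg k) = 4 from map_ofNat _ 4,
    fse_X0, fse_X1, fse_X2,
    show (fse k) (4 : Sg k) = 4 from map_ofNat _ 4]
  rw [Cp]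
  congr 1
  rw [map_mul, map_ofNat]
  rw [show ((4 : Polynomial (MvPolynomial (Fin 2) k))) = Polynomial.C 4 from
    (map_ofNat Polynomial.C 4).symm, ← map_mul]

lemma PsiA_Cp (h2 : (2:k) ≠ 0) : PsiA k (Cp k) = 0 := by
  rw [Cp, map_add, map_pow, PsiA_X, PsiA_C, map_mul, map_mul,
    show (gmap k) (4 : MvPolynomial (Fin 2) k) = 4 from map_ofNat _ 4,
    gmap_X0, gmap_X1]
  have h := hCmul h2
  linear_combination (-(X 0^2 * X 1^2 : Snat k)) * (C ((2:k)⁻¹) * 2 + 1) * h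

/-- KEY1 : if `ψ s = 0` then `c ∣ s`. -/
lemma exists_factor (h2 : (2:k) ≠ 0) (s : Sg k) (hs : psi k s = 0) :
    ∃ q : Sg k, s = cElt k * q := by
  set P := fse k (tauE k s) with hP
  have hPsiP : PsiA k P = 0 := by rw [hP, compat, hs]
  have hdiv := Polynomial.modByMonic_add_div P (Cp k)
  set R := P %ₘ Cp k with hR
  set Q := P /ₘ Cp k with hQ
  have hdeg : R.degree < 2 := by
    rw [hR, ← degree_Cp (k := k)]
    exact Polynomial.degree_modByMonic_lt P monic_Cp
  have hdeg1 : R.degree ≤ 1 := by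
    exact Order.le_of_lt_succ (by exact_mod_cast hdeg)
  have hRform := Polynomial.eq_X_add_C_of_degree_le_one hdeg1
  have hPsiR : PsiA k R = 0 := by
    have : PsiA k R + PsiA k (Cp k) * PsiA k Q = 0 := by
      rw [← map_mul, ← map_add, hdiv, hPsiP]
    rwa [PsiA_Cp h2, zero_mul, add_zero] at this
  rw [hRform, map_add, map_mul, PsiA_C, PsiA_C, PsiA_X] at hPsiR
  have hpar := parity h2 (R.coeff 0) (R.coeff 1) (by linear_combination hPsiR)
  have hR0 : R = 0 := by rw [hRform, hpar.1, hpar.2]; simp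
  have hPfac : P = Cp k * Q := by rw [← hdiv, hR0, zero_add]
  refine ⟨(tauE k).symm ((fse k).symm Q), ?_⟩
  have : s = (tauE k).symm ((fse k).symm P) := by rw [hP]; simp
  rw [this, hPfac, map_mul, map_mul]
  congr 1
  rw [← fse_tau_cElt]
  simp

lemma isHomogeneous_aeval {σ τ : Type*} [Fintype σ] (f : σ → MvPolynomial τ k) (m : ℕ)
    (hf : ∀ i, (f i).IsHomogeneous m) {p : MvPolynomial σ k} {n : ℕ}
    (hp : p.IsHomogeneous n) : (aeval f p).IsHomogeneous (m * n) := by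
  rw [← p.support_sum_monomial_coeff, map_sum]
  apply MvPolynomial.IsHomogeneous.sum
  intro d hd
  rw [aeval_monomial]
  have hdeg : Finsupp.degree d = n := by
    rw [Finsupp.degree_eq_weight_one]
    exact hp (mem_support_iff.mp hd)
  have h1 : ((algebraMap k (MvPolynomial τ k)) (coeff d p)).IsHomogeneous 0 :=
    isHomogeneous_C _ _
  have h2 : (d.prod fun i l => f i ^ l).IsHomogeneous (m * n) := by
    have := MvPolynomial.IsHomogeneous.prod d.support (fun i => f i ^ d i)
      (fun i => m * d i) (fun i _ => (hf i).pow (d i))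
    rw [Finsupp.prod]
    convert this using 1
    rw [← Finset.mul_sum]
    congr 1
    rw [← hdeg, Finsupp.degree_apply]
  have := h1.mul h2
  rwa [zero_add] at this

/-- KEY : homogeneous version of exists_factor. -/
lemma exists_homog_factor (h2 : (2:k) ≠ 0) {n : ℕ} (hn : 2 ≤ n) (s : Sg k)
    (hshom : s.IsHomogeneous n) (hs : psi k s = 0) :
    ∃ t : Sg k, t.IsHomogeneous (n - 2) ∧ s = cElt k * t := by
  obtain ⟨q, hq⟩ := exists_factor h2 s hs
  refine ⟨homogeneousComponent (n - 2) q, homogeneousComponent_isHomogeneous _ _, ?_⟩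
  have hs' : homogeneousComponent n s = s := by
    rw [homogeneousComponent_of_mem hshom, if_pos rfl]
  have hq' : q = ∑ m ∈ Finset.range (q.totalDegree + 1), homogeneousComponent m q :=
    (sum_homogeneousComponent q).symm
  have hcomp : homogeneousComponent n s
      = ∑ m ∈ Finset.range (q.totalDegree + 1),
          (if m = n - 2 then cElt k * homogeneousComponent m q else 0) := by
    conv_lhs => rw [hq]
    conv_lhs => rw [hq', Finset.mul_sum, map_sum]
    apply Finset.sum_congr rfl
    intro m _
    have hmem : cElt k * homogeneousComponent m q ∈ homogeneousSubmodule (Fin 3) k (2 + m) :=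
      (cElt_isHomogeneous.mul (homogeneousComponent_isHomogeneous m q))
    rw [homogeneousComponent_of_mem hmem]
    congr 1
    simp only [eq_iff_iff]
    omega
  rw [Finset.sum_ite_eq' (Finset.range (q.totalDegree + 1)) (n-2)
    (fun m => cElt k * homogeneousComponent m q)] at hcomp
  split at hcomp
  · rw [← hs', hcomp]
  · next h =>
    have hz : homogeneousComponent (n-2) q = 0 := by
      apply homogeneousComponent_eq_zero
      simp only [Finset.mem_range, not_lt] at h
      omega
    rw [← hs', hcomp, hz, mul_zero]

lemma psi_cElt (h2 : (2:k) ≠ 0) : psi k (cElt k) = 0 := by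
  rw [cElt, map_add, map_pow, map_mul, map_mul,
    show (psi k) (4 : Sg k) = 4 from map_ofNat _ 4, psi_X0, psi_X1, psi_X2]
  have h := hCmul h2
  linear_combination (-(X 0^2 * X 1^2 : Snat k)) * (C ((2:k)⁻¹) * 2 + 1) * h

lemma psi_e_pow (n i : ℕ) (hi : i ≤ n) :
    psi k ((X 0 : Sg k) ^ i * X 1 ^ (n - i))
      = (((-2:k) ^ i)⁻¹) • ((X 0 : Snat k) ^ (n + i) * X 1 ^ (n - i)) := by
  rw [map_mul, map_pow, map_pow, psi_X0, psi_X1, smul_eq_C_mul]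
  have hc : (C (((-2:k) ^ i)⁻¹) : Snat k) = (-(C ((2:k)⁻¹))) ^ i := by
    rw [← inv_pow, map_pow]
    congr 1
    rw [show ((-2:k))⁻¹ = -(2:k)⁻¹ from by rw [inv_neg], map_neg]
  rw [hc, mul_pow, mul_pow, ← pow_mul,
    show (n + i) = 2 * i + (n - i) from by omega, pow_add]
  ring

lemma psi_f_pow (n i : ℕ) (hi : i ≤ n) :
    psi k ((X 2 : Sg k) ^ i * X 1 ^ (n - i))
      = (((2:k) ^ i)⁻¹) • ((X 0 : Snat k) ^ (n - i) * X 1 ^ (n + i)) := by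
  rw [map_mul, map_pow, map_pow, psi_X2, psi_X1, smul_eq_C_mul]
  have hc : (C (((2:k) ^ i)⁻¹) : Snat k) = (C ((2:k)⁻¹)) ^ i := by
    rw [← inv_pow, map_pow]
  rw [hc, mul_pow, mul_pow, ← pow_mul,
    show (n + i) = 2 * i + (n - i) from by omega, pow_add]
  ring

lemma psi_homog {s : Sg k} {n : ℕ} (hs : s.IsHomogeneous n) :
    (psi k s).IsHomogeneous (2 * n) := by
  apply isHomogeneous_aeval _ 2 _ hs
  intro i
  fin_cases i
  · show (-(C (2:k)⁻¹) * X 0 ^ 2 : Snat k).IsHomogeneous 2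
    rw [neg_mul]
    apply MvPolynomial.IsHomogeneous.neg
    have := (isHomogeneous_C (Fin 2) ((2:k)⁻¹)).mul (isHomogeneous_X_pow (R := k) 0 2)
    simpa using this
  · show ((X 0 : Snat k) * X 1).IsHomogeneous 2
    exact (isHomogeneous_X k 0).mul (isHomogeneous_X k 1)
  · show (C (2:k)⁻¹ * X 1 ^ 2 : Snat k).IsHomogeneous 2
    have := (isHomogeneous_C (Fin 2) ((2:k)⁻¹)).mul (isHomogeneous_X_pow (R := k) 1 2)
    simpa using this

lemma monomial_fin2 (d : Fin 2 →₀ ℕ) (c : k) :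
    (monomial d c : Snat k) = c • ((X 0 : Snat k) ^ (d 0) * X 1 ^ (d 1)) := by
  have hd : d = Finsupp.single 0 (d 0) + Finsupp.single 1 (d 1) := by
    ext i; fin_cases i <;> simp [Finsupp.single_apply]
  rw [X_pow_eq_monomial, X_pow_eq_monomial, monomial_mul, smul_monomial, smul_eq_mul, mul_one,
    ← hd, mul_one]

lemma degree_fin2 (d : Fin 2 →₀ ℕ) : Finsupp.degree d = d 0 + d 1 := by
  rw [Finsupp.degree_apply, Finset.sum_subset (Finset.subset_univ d.support)
    (fun i _ hi => Finsupp.notMem_support_iff.mp hi), Fin.sum_univ_two]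

lemma homog_XX (a b : Fin 3) (i j : ℕ) :
    ((X a : Sg k) ^ i * X b ^ j).IsHomogeneous (i + j) :=
  (isHomogeneous_X_pow _ _).mul (isHomogeneous_X_pow _ _)

lemma cElt_ne_zero : cElt k ≠ 0 := by
  intro h
  have := congrArg (eval ![0, 1, 0]) h
  simp [cElt] at this

lemma actP_mul (u : sl2 k) (s t : Snat k) :
    actP k u (s * t) = actP k u s * t + s * actP k u t := by
  simpa only [lie_Snat_def] using lie_mul_Snat u s t

lemma actP_C (u : sl2 k) (r : k) : actP k u (C r) = 0 := by
  rw [show (C r : Snat k) = algebraMap k (Snat k) r from rfl]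
  exact Derivation.map_algebraMap _ _

lemma actS_C (u : sl2 k) (r : k) : actS k u (C r) = 0 := by
  rw [show (C r : Sg k) = algebraMap k (Sg k) r from rfl]
  exact Derivation.map_algebraMap _ _

lemma actP_psi_X0 (h2 : (2:k) ≠ 0) (u : sl2 k) :
    actP k u (psi k (X 0)) = psi k (actS k u (X 0)) := by
  have hC2 := hCmul (k := k) h2
  rw [show actS k u (X 0) = C (2 * u 1) * X 0 - C (u 2) * X 1 from lie_X0 u]
  simp only [pow_two, psi_X0, psi_X1, psi_X2, neg_mul, map_neg, actP_mul, actP_C, actP_X0,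
    actP_X1, map_sub, map_mul, psi_C, smul_eq_C_mul, map_ofNat, zero_mul, mul_zero,
    add_zero, zero_add]
  linear_combination (-(C (u 2) * X 0 * X 1 : Snat k)) * hC2

lemma actP_psi_X1 (h2 : (2:k) ≠ 0) (u : sl2 k) :
    actP k u (psi k (X 1)) = psi k (actS k u (X 1)) := by
  have hC2 := hCmul (k := k) h2
  rw [show actS k u (X 1) = C (2 * u 2) * X 2 - C (2 * u 0) * X 0 from lie_X1 u]
  simp only [pow_two, psi_X0, psi_X1, psi_X2, neg_mul, map_neg, actP_mul, actP_C, actP_X0,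
    actP_X1, map_sub, map_mul, psi_C, smul_eq_C_mul, map_ofNat, zero_mul, mul_zero,
    add_zero, zero_add]
  linear_combination (-(C (u 2) * (X 1 * X 1) + C (u 0) * (X 0 * X 0) : Snat k)) * hC2

lemma actP_psi_X2 (h2 : (2:k) ≠ 0) (u : sl2 k) :
    actP k u (psi k (X 2)) = psi k (actS k u (X 2)) := by
  have hC2 := hCmul (k := k) h2
  rw [show actS k u (X 2) = C (u 0) * X 1 - C (2 * u 1) * X 2 from lie_X2 u]
  simp only [pow_two, psi_X0, psi_X1, psi_X2, neg_mul, map_neg, actP_mul, actP_C, actP_X0,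
    actP_X1, map_sub, map_mul, psi_C, smul_eq_C_mul, map_ofNat, zero_mul, mul_zero,
    add_zero, zero_add]
  linear_combination ((C (u 0) * X 0 * X 1 : Snat k)) * hC2

lemma actP_psi (h2 : (2:k) ≠ 0) (u : sl2 k) (s : Sg k) :
    actP k u (psi k s) = psi k (actS k u s) := by
  have hgen : ∀ i : Fin 3, actP k u (psi k (X i)) = psi k (actS k u (X i)) := by
    intro i
    fin_cases i
    · exact actP_psi_X0 h2 u
    · exact actP_psi_X1 h2 u
    · exact actP_psi_X2 h2 u
  induction s using MvPolynomial.induction_on with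
  | C r => rw [psi_C, actP_C, actS_C, map_zero]
  | add p q hp hq => rw [map_add, map_add, hp, hq, map_add, map_add]
  | mul_X p i hp =>
      have hS : actS k u (p * X i) = actS k u p * X i + p * actS k u (X i) := by
        simpa only [lie_Sg_def] using lie_mul_Sg u p (X i)
      rw [map_mul, actP_mul, hS, map_add, map_mul, map_mul, hp, hgen i]

end sl2

open sl2 in
/-- For every `n ≥ 2` the sequence
`0 → S^{n-2} →(·c) S^n →(φ) S^{2n}(L(1)) → 0` is a short exact sequence of
`g`-modules, where the first map is multiplication by `c = h² + 4ef` and `φ` is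
the `g`-module homomorphism determined by `φ(c·S^{n-2}) = 0`,
`φ(eⁱhⁿ⁻ⁱ) = (-2)⁻ⁱ xⁿ⁺ⁱ yⁿ⁻ⁱ`, `φ(hⁿ) = xⁿyⁿ`, `φ(fⁱhⁿ⁻ⁱ) = 2⁻ⁱ xⁿ⁻ⁱ yⁿ⁺ⁱ`. -/
theorem sl2_symmetric_power_short_exact_sequence
    (k : Type) [Field k] (p : ℕ) [CharP k p] (hp : 2 < p)
    (n : ℕ) (hn : 2 ≤ n) :
    ∃ φ : ↥(SD k n) →ₗ[k] ↥(PD k (2 * n)),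
      IsPhi k n φ ∧
      (∀ (u : sl2 k) (s : ↥(SD k (n - 2))),
        mulC k n hn ⁅u, s⁆ = ⁅u, mulC k n hn s⁆) ∧
      Function.Injective (mulC k n hn) ∧
      LinearMap.range (mulC k n hn) = LinearMap.ker φ ∧
      Function.Surjective φ := by
  classical
  have h2 : (2 : k) ≠ 0 := by
    intro hc
    have h21 : ((2 : ℕ) : k) = 0 := by exact_mod_cast hc
    have hdvd : p ∣ 2 := (CharP.cast_eq_zero_iff k p 2).mp h21
    have := Nat.le_of_dvd (by norm_num) hdvd
    omega
  have hm2 : (-2 : k) ≠ 0 := neg_ne_zero.mpr h2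
  let φ : ↥(SD k n) →ₗ[k] ↥(PD k (2 * n)) :=
    { toFun := fun s => ⟨psi k (s : Sg k), mem_PD_iff.mpr (psi_homog (mem_SD_iff.mp s.2))⟩
      map_add' := fun s t => Subtype.ext (map_add (psi k) (s : Sg k) (t : Sg k))
      map_smul' := fun a s => Subtype.ext (map_smul (psi k) a (s : Sg k)) }
  have hφcoe : ∀ s : ↥(SD k n), ((φ s : ↥(PD k (2 * n))) : Snat k) = psi k (s : Sg k) :=
    fun s => rfl
  have heq : ∀ (u : sl2 k) (s : ↥(SD k n)), φ ⁅u, s⁆ = ⁅u, φ s⁆ := by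
    intro u s
    apply Subtype.ext
    rw [hφcoe, LieSubmodule.coe_bracket, LieSubmodule.coe_bracket, hφcoe,
      lie_Sg_def, lie_Snat_def]
    exact (actP_psi h2 u _).symm
  have hkill : ∀ (s : ↥(SD k n)) (t : Sg k), t.IsHomogeneous (n - 2) →
      (s : Sg k) = cElt k * t → φ s = 0 := by
    intro s t ht hst
    apply Subtype.ext
    rw [hφcoe, hst, map_mul, psi_cElt h2, zero_mul]
    exact (ZeroMemClass.coe_zero _).symm
  have hepow : ∀ (s : ↥(SD k n)) (i : ℕ), i ≤ n →
      (s : Sg k) = X 0 ^ i * X 1 ^ (n - i) →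
      ((φ s : Snat k)) = (((-2 : k) ^ i)⁻¹) • (X 0 ^ (n + i) * X 1 ^ (n - i)) := by
    intro s i hi hst
    rw [hφcoe, hst, psi_e_pow n i hi]
  have hfpow : ∀ (s : ↥(SD k n)) (i : ℕ), i ≤ n →
      (s : Sg k) = X 2 ^ i * X 1 ^ (n - i) →
      ((φ s : Snat k)) = (((2 : k) ^ i)⁻¹) • (X 0 ^ (n - i) * X 1 ^ (n + i)) := by
    intro s i hi hst
    rw [hφcoe, hst, psi_f_pow n i hi]
  have hinj : Function.Injective (mulC k n hn) := by
    intro s t h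
    have hcoe : cElt k * (s : Sg k) = cElt k * (t : Sg k) :=
      congrArg (fun z : ↥(SD k n) => (z : Sg k)) h
    exact Subtype.ext (mul_left_cancel₀ cElt_ne_zero hcoe)
  have hrangeker : LinearMap.range (mulC k n hn) = LinearMap.ker φ := by
    apply le_antisymm
    · rintro x ⟨t, rfl⟩
      rw [LinearMap.mem_ker]
      apply Subtype.ext
      rw [hφcoe]
      show psi k (cElt k * (t : Sg k)) = ((0 : ↥(PD k (2 * n))) : Snat k)
      rw [map_mul, psi_cElt h2, zero_mul, ZeroMemClass.coe_zero]
    · intro s hs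
      have hker : psi k (s : Sg k) = 0 := by
        have h0 := LinearMap.mem_ker.mp hs
        have := congrArg (fun z : ↥(PD k (2 * n)) => (z : Snat k)) h0
        simpa [hφcoe] using this
      obtain ⟨t, hth, hft⟩ := exists_homog_factor h2 hn (s : Sg k) (mem_SD_iff.mp s.2) hker
      exact ⟨⟨t, mem_SD_iff.mpr hth⟩, Subtype.ext hft.symm⟩
  have hsurj : Function.Surjective φ := by
    have key : ∀ (d : Fin 2 →₀ ℕ) (c : k), Finsupp.degree d = 2 * n →
        ∃ s : ↥(SD k n), psi k (s : Sg k) = monomial d c := by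
      intro d c hd
      have hab : d 0 + d 1 = 2 * n := by rw [← degree_fin2 d, hd]
      rcases le_or_gt n (d 0) with hcase | hcase
      · set i := d 0 - n with hidef
        have hin : i ≤ n := by omega
        have hs0 : ((X 0 : Sg k) ^ i * X 1 ^ (n - i)).IsHomogeneous n := by
          have := homog_XX (k := k) 0 1 i (n - i)
          rwa [show i + (n - i) = n from by omega] at this
        refine ⟨(c * (-2 : k) ^ i) • ⟨_, mem_SD_iff.mpr hs0⟩, ?_⟩
        rw [show ((((c * (-2:k)^i) • (⟨_, mem_SD_iff.mpr hs0⟩ : ↥(SD k n))) : ↥(SD k n)) : Sg k)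
          = (c * (-2:k)^i) • ((X 0 : Sg k) ^ i * X 1 ^ (n - i)) from rfl]
        rw [map_smul, psi_e_pow n i hin, smul_smul, monomial_fin2,
          show n + i = d 0 from by omega, show n - i = d 1 from by omega,
          mul_assoc, mul_inv_cancel₀ (pow_ne_zero _ hm2), mul_one]
      · set i := n - d 0 with hidef
        have hin : i ≤ n := by omega
        have hs0 : ((X 2 : Sg k) ^ i * X 1 ^ (n - i)).IsHomogeneous n := by
          have := homog_XX (k := k) 2 1 i (n - i)
          rwa [show i + (n - i) = n from by omega] at this
        refine ⟨(c * (2 : k) ^ i) • ⟨_, mem_SD_iff.mpr hs0⟩, ?_⟩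
        rw [show ((((c * (2:k)^i) • (⟨_, mem_SD_iff.mpr hs0⟩ : ↥(SD k n))) : ↥(SD k n)) : Sg k)
          = (c * (2:k)^i) • ((X 2 : Sg k) ^ i * X 1 ^ (n - i)) from rfl]
        rw [map_smul, psi_f_pow n i hin, smul_smul, monomial_fin2,
          show n - i = d 0 from by omega, show n + i = d 1 from by omega,
          mul_assoc, mul_inv_cancel₀ (pow_ne_zero _ h2), mul_one]
    intro q
    have hq := mem_PD_iff.mp q.2
    have hdeg : ∀ d ∈ (q : Snat k).support, Finsupp.degree d = 2 * n := by
      intro d hd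
      rw [Finsupp.degree_eq_weight_one]
      exact hq (mem_support_iff.mp hd)
    choose f hf using fun (d : {x // x ∈ (q : Snat k).support}) =>
      key (d : Fin 2 →₀ ℕ) (coeff (d : Fin 2 →₀ ℕ) (q : Snat k)) (hdeg _ d.2)
    refine ⟨∑ d ∈ (q : Snat k).support.attach, f d, ?_⟩
    apply Subtype.ext
    rw [hφcoe]
    have hcoe : (((∑ d ∈ (q : Snat k).support.attach, f d) : ↥(SD k n)) : Sg k)
        = ∑ d ∈ (q : Snat k).support.attach, ((f d : Sg k)) := by
      exact AddSubmonoidClass.coe_finset_sum _ _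
    rw [hcoe, map_sum, Finset.sum_congr rfl (fun d _ => hf d),
      Finset.sum_attach ((q : Snat k).support)
        (fun d => monomial d (coeff d (q : Snat k)))]
    exact (q : Snat k).support_sum_monomial_coeff
  exact ⟨φ, ⟨heq, hkill, hepow, hfpow⟩, mulC_equivariant k n hn, hinj, hrangeker, hsurj⟩
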